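/- arXiv:1902.08218 — 6 statements merged into one kernel-verified Lean document; each statement's English description precedes it below -/
import Mathlib

section
/- The Graver basis of an integer matrix A is finite. -/
/-- The conformal partial order on integer vectors. -/
def Conf {ι : Type*} (x y : ι → ℤ) : Prop :=
  ∀ i, |x i| ≤ |y i| ∧ 0 ≤ x i * y i

/-- The Graver basis of an integer matrix `A`: the set of `⊑`-minimal elements of
`{x : Ax = 0, x ≠ 0}`. -/
def graverBasis {κ ι : Type*} [Fintype ι] (A : Matrix κ ι ℤ) : Set (ι → ℤ) :=
  {g | A.mulVec g = 0 ∧ g ≠ 0 ∧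
    ∀ y : ι → ℤ, A.mulVec y = 0 → y ≠ 0 → Conf y g → y = g}

/-! Splitting an integer vector into its positive and negative parts turns the conformal order
`Conf` into the componentwise order on `ℕ`-vectors, which is a well-quasi-order by Dickson's lemma.
Hence `Conf` is a well-quasi-order, and the Graver basis, being a `Conf`-antichain, is finite. -/

/-- The map `x ↦ (x⁺, x⁻)`, with the `true` coordinates holding `x⁺`. -/
def posNegParts {ι : Type*} (x : ι → ℤ) : ι × Bool → ℕ :=
  fun p => if p.2 then (x p.1).toNat else (-x p.1).toNat

lemma conf_of_posNegParts_le {ι : Type*} {x y : ι → ℤ} (h : posNegParts x ≤ posNegParts y) :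
    Conf x y := by
  intro i
  have hpos := h (i, true)
  have hneg := h (i, false)
  simp only [posNegParts, if_true, Bool.false_eq_true, if_false] at hpos hneg
  rcases lt_trichotomy (x i) 0 with hx | hx | hx
  · have hy : y i < 0 := by omega
    rw [abs_of_neg hx, abs_of_neg hy]
    exact ⟨by omega, (mul_pos_of_neg_of_neg hx hy).le⟩
  · simp [hx]
  · have hy : 0 < y i := by omega
    rw [abs_of_pos hx, abs_of_pos hy]
    exact ⟨by omega, mul_nonneg hx.le hy.le⟩

theorem wellQuasiOrdered_conf {ι : Type*} [Finite ι] : WellQuasiOrdered (Conf (ι := ι)) := by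
  intro f
  obtain ⟨m, n, hmn, hle⟩ := wellQuasiOrdered_le (posNegParts ∘ f)
  exact ⟨m, n, hmn, conf_of_posNegParts_le hle⟩

lemma isAntichain_conf_graverBasis {κ ι : Type*} [Fintype ι] (A : Matrix κ ι ℤ) :
    IsAntichain Conf (graverBasis A) := by
  intro g hg h hh hne hconf
  exact hne (hh.2.2 g hg.1 hg.2.1 hconf)

/-- The Graver basis of an integer matrix is finite. -/
theorem graverBasis_finite (m n : ℕ) (A : Matrix (Fin m) (Fin n) ℤ) :
    (graverBasis A).Finite :=
  (isAntichain_conf_graverBasis A).finite_of_wellQuasiOrdered wellQuasiOrdered_conf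
end

section
/- Positive sum property of the Graver basis: for every nonzero z ∈ ℤ^n with Az = 0, there exist finitely many Graver basis elements g_1, …, g_k ∈ G(A), each satisfying g_i ⊑ z, and positive integers α_1, …, α_k, such that z = Σ_i α_i g_i. -/
private lemma conf_trans {ι : Type*} {x y z : ι → ℤ} (h1 : Conf x y) (h2 : Conf y z) :
    Conf x z := by
  intro i
  obtain ⟨a1, b1⟩ := h1 i
  obtain ⟨a2, b2⟩ := h2 i
  refine ⟨a1.trans a2, ?_⟩
  rcases eq_or_ne (y i) 0 with hy | hy
  · have hx : x i = 0 := by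
      have := a1
      rw [hy, abs_zero] at this
      exact abs_eq_zero.mp (le_antisymm this (abs_nonneg _))
    simp [hx]
  · have hyy : 0 < y i * y i := mul_self_pos.mpr hy
    nlinarith [mul_nonneg b1 b2]

private lemma sub_abs {a b : ℤ} (h1 : |a| ≤ |b|) (h2 : 0 ≤ a * b) :
    |b - a| = |b| - |a| ∧ 0 ≤ (b - a) * b := by
  rcases le_or_gt 0 a with ha | ha <;> rcases le_or_gt 0 b with hb | hb
  · rw [abs_of_nonneg ha, abs_of_nonneg hb] at h1 ⊢
    rw [abs_of_nonneg (by linarith)]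
    constructor <;> nlinarith
  · rw [abs_of_nonneg ha, abs_of_neg hb] at h1 ⊢
    have ha0 : a = 0 := by nlinarith
    subst ha0
    simp [mul_self_nonneg, le_of_lt hb]
  · rw [abs_of_neg ha, abs_of_nonneg hb] at h1 ⊢
    have hb0 : b = 0 := by nlinarith
    subst hb0
    constructor <;> nlinarith
  · rw [abs_of_neg ha, abs_of_neg hb] at h1 ⊢
    rw [abs_of_nonpos (by linarith)]
    constructor <;> nlinarith

private lemma eq_of_abs_eq {a b : ℤ} (h1 : |a| = |b|) (h2 : 0 ≤ a * b) : a = b := by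
  rcases abs_eq_abs.mp h1 with h | h
  · exact h
  · subst h
    have hb : b = 0 := by nlinarith
    simp [hb]

/-- Positive sum property of the Graver basis: every nonzero `z` with `Az = 0` is a
positive integer combination of finitely many Graver basis elements, each `⊑ z`. -/
theorem graver_positive_sum_property (m n : ℕ) (A : Matrix (Fin m) (Fin n) ℤ)
    (z : Fin n → ℤ) (hz : z ≠ 0) (hAz : A.mulVec z = 0) :
    ∃ (k : ℕ) (g : Fin k → (Fin n → ℤ)) (α : Fin k → ℤ),
      (∀ i, g i ∈ graverBasis A) ∧ (∀ i, Conf (g i) z) ∧ (∀ i, 0 < α i) ∧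
      z = ∑ i, α i • g i := by
  suffices H : ∀ N (z : Fin n → ℤ), (∑ i, (z i).natAbs) = N → z ≠ 0 → A.mulVec z = 0 →
      ∃ (k : ℕ) (g : Fin k → (Fin n → ℤ)) (α : Fin k → ℤ),
        (∀ i, g i ∈ graverBasis A) ∧ (∀ i, Conf (g i) z) ∧ (∀ i, 0 < α i) ∧
        z = ∑ i, α i • g i by
    exact H _ z rfl hz hAz
  intro N
  induction N using Nat.strong_induction_on with
  | _ N ih =>
    intro z hN hz hAz
    -- the set of nonzero kernel vectors conformal to z
    set S : Set (Fin n → ℤ) :=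
      {y | A.mulVec y = 0 ∧ y ≠ 0 ∧ Conf y z} with hS
    have hzS : z ∈ S := ⟨hAz, hz, fun i => ⟨le_refl _, mul_self_nonneg _⟩⟩
    have hTne : ((fun y => ∑ i, (y i).natAbs) '' S).Nonempty := ⟨_, z, hzS, rfl⟩
    obtain ⟨g, hgS, hgmin⟩ : ∃ g ∈ S, ∀ y ∈ S, (∑ i, (g i).natAbs) ≤ ∑ i, (y i).natAbs := by
      obtain ⟨g, hgS, hge⟩ := Nat.sInf_mem hTne
      refine ⟨g, hgS, fun y hy => ?_⟩
      have h : (∑ i, (y i).natAbs) ∈ (fun y => ∑ i, (y i).natAbs) '' S := ⟨y, hy, rfl⟩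
      have h2 := Nat.sInf_le h
      rw [← hge] at h2
      simpa using h2
    obtain ⟨hAg, hgne, hgz⟩ := hgS
    -- `g` is in the Graver basis
    have hgG : g ∈ graverBasis A := by
      refine ⟨hAg, hgne, fun y hAy hyne hyg => ?_⟩
      have hyz : Conf y z := conf_trans hyg hgz
      have h1 : (∑ i, (g i).natAbs) ≤ ∑ i, (y i).natAbs := hgmin y ⟨hAy, hyne, hyz⟩
      have h2 : ∀ i, (y i).natAbs ≤ (g i).natAbs := by
        intro i
        have h := (hyg i).1
        rw [Int.abs_eq_natAbs, Int.abs_eq_natAbs] at h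
        exact_mod_cast h
      have h3 : ∑ i, (y i).natAbs = ∑ i, (g i).natAbs :=
        le_antisymm (Finset.sum_le_sum fun i _ => h2 i) h1
      have h4 : ∀ i, (y i).natAbs = (g i).natAbs := by
        intro i
        by_contra hne
        have hlt : (y i).natAbs < (g i).natAbs := lt_of_le_of_ne (h2 i) hne
        have : (∑ j, (y j).natAbs) < ∑ j, (g j).natAbs :=
          Finset.sum_lt_sum (fun j _ => h2 j) ⟨i, Finset.mem_univ i, hlt⟩
        omega
      funext i
      refine eq_of_abs_eq ?_ (hyg i).2
      rw [Int.abs_eq_natAbs, Int.abs_eq_natAbs, h4 i]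
    -- the conformal decomposition step
    have hkey : ∀ i, |z i - g i| = |z i| - |g i| ∧ 0 ≤ (z i - g i) * z i :=
      fun i => sub_abs (hgz i).1 (hgz i).2
    have hconf : Conf (z - g) z := by
      intro i
      refine ⟨?_, by simpa using (hkey i).2⟩
      have := abs_nonneg (g i)
      simp only [Pi.sub_apply]
      rw [(hkey i).1]
      linarith
    rcases eq_or_ne (z - g) 0 with hzg | hzg
    · -- z = g
      have hzeq : z = g := by
        have := sub_eq_zero.mp hzg
        exact this
      refine ⟨1, fun _ => g, fun _ => 1, fun _ => hgG, fun _ => hzeq ▸ hgz, fun _ => one_pos, ?_⟩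
      simp [hzeq]
    · -- recurse on z - g
      have hA' : A.mulVec (z - g) = 0 := by
        rw [Matrix.mulVec_sub, hAz, hAg, sub_zero]
      have hnatabs : ∀ i, (z i - g i).natAbs + (g i).natAbs = (z i).natAbs := by
        intro i
        have h := (hkey i).1
        rw [Int.abs_eq_natAbs, Int.abs_eq_natAbs, Int.abs_eq_natAbs] at h
        omega
      obtain ⟨i0, hi0⟩ : ∃ i, g i ≠ 0 := Function.ne_iff.mp hgne
      have hlt : (∑ i, ((z - g) i).natAbs) < N := by
        rw [← hN]
        refine Finset.sum_lt_sum (fun i _ => by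
          have := hnatabs i
          simp only [Pi.sub_apply]
          omega) ⟨i0, Finset.mem_univ i0, ?_⟩
        have h := hnatabs i0
        have : 0 < (g i0).natAbs := Int.natAbs_pos.mpr hi0
        simp only [Pi.sub_apply]
        omega
      obtain ⟨k, g', α', hG', hC', hP', hsum⟩ := ih _ hlt (z - g) rfl hzg hA'
      refine ⟨k + 1, Fin.cons g g', Fin.cons 1 α', ?_, ?_, ?_, ?_⟩
      · intro i
        refine Fin.cases ?_ ?_ i
        · simpa using hgG
        · intro j; simpa using hG' j
      · intro i
        refine Fin.cases ?_ ?_ i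
        · simpa using hgz
        · intro j
          simpa using conf_trans (hC' j) hconf
      · intro i
        refine Fin.cases ?_ ?_ i
        · simp
        · intro j; simpa using hP' j
      · rw [Fin.sum_univ_succ]
        simp only [Fin.cons_zero, Fin.cons_succ, one_smul]
        rw [← hsum]
        abel
end

section
/- Every nonzero element of ker_ℤ(A) has some Graver basis element below it: if z ∈ ℤ^n, z ≠ 0 and Az = 0, then there exists g ∈ G(A) with g ⊑ z. -/
section SameSign

variable {α : Type*} [CommRing α] [LinearOrder α] [IsStrictOrderedRing α] {a b c : α}

lemma mul_nonneg_of_abs_le_of_mul_nonneg (hab : |a| ≤ |b|) (hab' : 0 ≤ a * b)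
    (hbc' : 0 ≤ b * c) : 0 ≤ a * c := by
  rcases eq_or_ne b 0 with rfl | hb
  · simp [abs_nonpos_iff.mp (hab.trans_eq abs_zero)]
  · have : 0 ≤ a * c * (b * b) := by
      calc 0 ≤ (a * b) * (b * c) := mul_nonneg hab' hbc'
        _ = a * c * (b * b) := by ring
    exact nonneg_of_mul_nonneg_left this (mul_self_pos.mpr hb)

lemma eq_of_abs_eq_of_mul_nonneg (h : |a| = |b|) (hab : 0 ≤ a * b) : a = b := by
  rcases abs_eq_abs.mp h with rfl | rfl
  · rfl
  · have : b * b = 0 := le_antisymm (by simpa using hab) (mul_self_nonneg b)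
    simp [mul_self_eq_zero.mp this]

end SameSign

namespace Conf

variable {ι : Type*} {x y z : ι → ℤ}

lemma refl (x : ι → ℤ) : Conf x x :=
  fun i => ⟨le_rfl, mul_self_nonneg (x i)⟩

lemma trans (hxy : Conf x y) (hyz : Conf y z) : Conf x z := fun i =>
  ⟨(hxy i).1.trans (hyz i).1, mul_nonneg_of_abs_le_of_mul_nonneg (hxy i).1 (hxy i).2 (hyz i).2⟩

lemma sum_natAbs_lt [Fintype ι] (hyz : Conf y z) (hne : y ≠ z) :
    ∑ i, (y i).natAbs < ∑ i, (z i).natAbs := by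
  obtain ⟨j, hj⟩ := Function.ne_iff.mp hne
  have hlt : |y j| < |z j| :=
    (hyz j).1.lt_of_ne fun h => hj (eq_of_abs_eq_of_mul_nonneg h (hyz j).2)
  zify
  exact Finset.sum_lt_sum (fun i _ => (hyz i).1) ⟨j, Finset.mem_univ j, hlt⟩

end Conf

/-- Every nonzero element of `ker_ℤ(A)` has some Graver basis element below it. -/
theorem exists_graver_below (m n : ℕ) (A : Matrix (Fin m) (Fin n) ℤ)
    (z : Fin n → ℤ) (hz : z ≠ 0) (hAz : A.mulVec z = 0) :
    ∃ g ∈ graverBasis A, Conf g z := by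
  obtain ⟨g, ⟨hAg, hg, hgz⟩, hmin⟩ := (measure fun y : Fin n → ℤ => ∑ i, (y i).natAbs).wf.has_min
    {y | A.mulVec y = 0 ∧ y ≠ 0 ∧ Conf y z} ⟨z, hAz, hz, Conf.refl z⟩
  refine ⟨g, ⟨hAg, hg, fun y hAy hy hyg => ?_⟩, hgz⟩
  by_contra hne
  exact hmin y ⟨hAy, hy, hyg.trans hgz⟩ (hyg.sum_natAbs_lt hne)
end

section
/- For a tree-fold matrix A built from small matrices A_1,…,A_τ and a vector x = (x^1,…,x^n) with bricks x^i ∈ ℤ^t, the condition Ax = 0 holds if and only if Āx = 0, where Ā is obtained from A by extending each consecutive block of copies of A_i in every row leftward to column 1 (so each row of Ā is a sum of rows of A containing the same small matrix). -/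
/-- Tree-fold matrix row restructuring: for a small matrix `A` whose copies appear in
consecutive blocks given by breakpoints `d 0 = 0 < d 1 < ⋯ < d k = n`, the block
constraints `∑_{i ∈ [d j, d (j+1))} A x^i = 0` (for all blocks) hold iff the prefix-sum
constraints `∑_{i < d j} A x^i = 0` (for all breakpoints) hold.  This is exactly the
row-by-row statement that `A x = 0` iff `Ā x = 0`, where `Ā` extends every consecutive
block of copies of the small matrix leftward to column `1`. -/
theorem treefold_block_iff_prefix (s t k n : ℕ) (A : Matrix (Fin s) (Fin t) ℤ)
    (x : ℕ → Fin t → ℤ) (d : ℕ → ℕ) (hmono : Monotone d)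
    (h0 : d 0 = 0) (hlast : d k = n) :
    (∀ j < k, ∑ i ∈ Finset.Ico (d j) (d (j + 1)), A.mulVec (x i) = 0) ↔
    (∀ j ≤ k, ∑ i ∈ Finset.range (d j), A.mulVec (x i) = 0) := by

  constructor
  · intro hb j hj
    induction j with
    | zero => simp [h0]
    | succ m ih =>
      have hm : m ≤ k := le_of_lt hj
      have : Finset.range (d (m+1)) = Finset.range (d m) ∪ Finset.Ico (d m) (d (m+1)) := by
        rw [Finset.range_eq_Ico, Finset.range_eq_Ico, Finset.Ico_union_Ico_eq_Ico (Nat.zero_le _) (hmono (Nat.le_succ m))]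
      rw [this, Finset.sum_union (by rw [Finset.range_eq_Ico]; exact Finset.Ico_disjoint_Ico_consecutive 0 (d m) (d (m+1))),
        ih hm, hb m hj, zero_add]
  · intro hp j hj
    have : Finset.Ico (d j) (d (j+1)) = Finset.range (d (j+1)) \ Finset.range (d j) := by
      ext a; simp only [Finset.mem_Ico, Finset.mem_sdiff, Finset.mem_range]; omega
    rw [this, Finset.sum_sdiff_eq_sub (Finset.range_subset_range.mpr (hmono (Nat.le_succ j))),
      hp (j+1) hj, hp j (le_of_lt hj), sub_zero]
end

section
/- 3-partition to subtree cover reduction, backward direction: with the tree as above (root r, children v_1,…,v_{3n}, v_j having a_j leaf children, unit edge weights, B/4 < a_j < B/2, Σ_j a_j = nB), if there is a cover by n rooted subtrees each of weight at most B + 3, then each subtree contains exactly 3 of the vertices v_j together with all their children, and the corresponding triples of the a_j each sum to exactly B; hence the 3-partition instance is a yes-instance. -/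
/-!
Every middle vertex and every leaf lies in some subtree, so the weights of the `n` subtrees add
up to at least `3n + nB = n(B + 3)`. Hence each subtree has weight exactly `B + 3` and no middle
vertex lies in two subtrees. A leaf then lies in the unique subtree containing its parent, so a
subtree with `m` middle vertices `j` weighs `m + ∑ a j = B + 3`, and `B/4 < a j < B/2` forces
`m = 3`, whence `∑ a j = B`.
-/

open Finset

section Cover

variable {ι α : Type*} [Fintype ι] [Fintype α] (s : ι → Finset α)

theorem sum_card_eq_sum_card_filter_mem [DecidableEq α] :
    ∑ i, #(s i) = ∑ x, #{i | x ∈ s i} := by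
  simp only [card_filter]
  rw [sum_comm]
  simp

variable {s}

theorem card_le_sum_card_of_forall_exists_mem (h : ∀ x, ∃ i, x ∈ s i) :
    Fintype.card α ≤ ∑ i, #(s i) := by
  classical
  rw [sum_card_eq_sum_card_filter_mem, Fintype.card_eq_sum_ones]
  refine sum_le_sum fun x _ => card_pos.2 ?_
  obtain ⟨i, hi⟩ := h x
  exact ⟨i, by simpa using hi⟩

theorem existsUnique_mem_of_sum_card_le (h : ∀ x, ∃ i, x ∈ s i)
    (hle : ∑ i, #(s i) ≤ Fintype.card α) (x : α) : ∃! i, x ∈ s i := by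
  classical
  have hone : ∀ y, #{i | y ∈ s i} = 1 := by
    have hpos : ∀ y ∈ univ, 1 ≤ #{i | y ∈ s i} := fun y _ => card_pos.2 <| by
      obtain ⟨i, hi⟩ := h y
      exact ⟨i, by simpa using hi⟩
    refine fun y => ((sum_eq_sum_iff_of_le hpos).1 ?_ y (mem_univ y)).symm
    rw [← sum_card_eq_sum_card_filter_mem, ← Fintype.card_eq_sum_ones]
    exact le_antisymm (card_le_sum_card_of_forall_exists_mem h) hle
  obtain ⟨i, hi⟩ := card_eq_one.1 (hone x)
  have hmem : ∀ j, x ∈ s j ↔ j = i := by simpa [Finset.ext_iff] using hi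
  exact ⟨i, (hmem i).2 rfl, fun j => (hmem j).1⟩

end Cover

theorem mem_of_fst_mem_of_existsUnique {ι κ : Type*} {β : κ → Type*} {M : ι → Finset κ}
    {L : ι → Finset (Σ j, β j)} (hML : ∀ i x, x ∈ L i → x.1 ∈ M i)
    (hcovL : ∀ x, ∃ i, x ∈ L i) (huniq : ∀ j, ∃! i, j ∈ M i) {i : ι} {x : Σ j, β j}
    (hx : x.1 ∈ M i) : x ∈ L i := by
  obtain ⟨i', hi'⟩ := hcovL x
  rwa [(huniq x.1).unique hx (hML i' x hi')]

theorem card_eq_sum_card_of_mem_iff_fst_mem {κ : Type*} {β : κ → Type*} [∀ j, Fintype (β j)]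
    {s : Finset κ} {t : Finset (Σ j, β j)} (h : ∀ x, x ∈ t ↔ x.1 ∈ s) :
    #t = ∑ j ∈ s, Fintype.card (β j) := by
  rw [show t = s.sigma fun _ => univ by ext x; simp [h], card_sigma]
  rfl

theorem card_eq_three_of_card_add_sum_eq {ι : Type*} {s : Finset ι} {a : ι → ℕ} {B : ℕ}
    (ha : ∀ j ∈ s, B < 4 * a j ∧ 2 * a j < B) (h : #s + ∑ j ∈ s, a j = B + 3) :
    #s = 3 := by
  have hupper : #s * (B + 1) ≤ 4 * ∑ j ∈ s, a j := by
    simpa [mul_sum] using card_nsmul_le_sum s (4 * a ·) (B + 1) fun j hj => (ha j hj).1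
  have hlower : 2 * ∑ j ∈ s, a j + #s ≤ #s * B := by
    simpa [sum_add_distrib, mul_sum] using
      sum_le_card_nsmul s (2 * a · + 1) B fun j hj => (ha j hj).2
  obtain hs | hs | hs := lt_trichotomy #s 3
  · nlinarith
  · exact hs
  · nlinarith

/-- 3-partition to subtree cover, backward direction.  The tree has root `r` with `3n`
children `v_1,…,v_{3n}`, where `v_j` has `a j` leaf children and all edges have weight
`1` (with `B/4 < a j < B/2` and `∑ a j = n·B`).  A rooted subtree is given by its set
`M i` of middle vertices and its set `L i` of leaves, every chosen leaf's parent being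
chosen; its weight is `|M i| + |L i|`.  If `n` such subtrees cover all vertices and each
has weight at most `B + 3`, then every subtree contains exactly `3` middle vertices
together with all their children, the corresponding triples of the `a j` each sum to
`B`, and the middle vertices are partitioned among the subtrees; hence the 3-partition
instance is a yes-instance. -/
theorem subtree_cover_to_three_partition (n B : ℕ) (a : Fin (3 * n) → ℕ)
    (ha : ∀ j, B < 4 * a j ∧ 2 * a j < B)
    (hsum : ∑ j, a j = n * B)
    (M : Fin n → Finset (Fin (3 * n)))
    (L : Fin n → Finset ((j : Fin (3 * n)) × Fin (a j)))
    (hML : ∀ i x, x ∈ L i → x.1 ∈ M i)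
    (hcovM : ∀ j, ∃ i, j ∈ M i)
    (hcovL : ∀ x : (j : Fin (3 * n)) × Fin (a j), ∃ i, x ∈ L i)
    (hweight : ∀ i, (M i).card + (L i).card ≤ B + 3) :
    (∀ i, (M i).card = 3 ∧
      (∀ x : (j : Fin (3 * n)) × Fin (a j), x.1 ∈ M i → x ∈ L i) ∧
      (∑ j ∈ M i, a j = B)) ∧
    (∀ j, ∃! i, j ∈ M i) := by
  have hM : 3 * n ≤ ∑ i, #(M i) := by
    simpa using card_le_sum_card_of_forall_exists_mem hcovM
  have hL : n * B ≤ ∑ i, #(L i) := by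
    simpa [hsum] using card_le_sum_card_of_forall_exists_mem hcovL
  have htotal : ∑ i, #(M i) + ∑ i, #(L i) ≤ n * (B + 3) := by
    simpa [sum_add_distrib] using sum_le_sum fun i (_ : i ∈ univ) => hweight i
  have huniq : ∀ j, ∃! i, j ∈ M i :=
    existsUnique_mem_of_sum_card_le hcovM (by rw [Fintype.card_fin]; linarith)
  have htight : ∀ i, #(M i) + #(L i) = B + 3 := fun i =>
    (sum_eq_sum_iff_of_le fun i _ => hweight i).1
      (by simp only [sum_add_distrib, sum_const, card_univ, Fintype.card_fin, smul_eq_mul]; linarith)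
      i (mem_univ i)
  have hfull : ∀ i x, x.1 ∈ M i → x ∈ L i := fun i x =>
    mem_of_fst_mem_of_existsUnique hML hcovL huniq
  refine ⟨fun i => ?_, huniq⟩
  have hleaves : #(L i) = ∑ j ∈ M i, a j := by
    simpa using card_eq_sum_card_of_mem_iff_fst_mem fun x => ⟨hML i x, hfull i x⟩
  have hthree := card_eq_three_of_card_add_sum_eq (fun j _ => ha j) (hleaves ▸ htight i)
  exact ⟨hthree, hfull i, by have := htight i; omega⟩
end

section
/- Solution-to-ILP direction: if a rooted tree T (preprocessed so all leaves have equal depth, weights on vertices, root weight 0) admits a cover by m rooted subtrees each of weight at most B, where each leaf of T is assigned to exactly one subtree, then the configuration ILP has a feasible nonnegative integer solution with objective value Σ_j x_{1,(CF_j,1)} ≤ m. -/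
open scoped Classical

section ConfigILP

variable {V J : Type*} [Fintype V] [DecidableEq V] [Fintype J]

/-- The children of `v` inside the vertex set `W` of a rooted tree given by a parent
function (the root `r` is nobody's child). -/
noncomputable def childrenIn (r : V) (parent : V → V) (W : Finset V) (v : V) : Finset V :=
  W.filter (fun s => parent s = v ∧ s ≠ r)

/-- `v` is a leaf of the vertex set `W`. -/
def leafIn (r : V) (parent : V → V) (W : Finset V) (v : V) : Prop :=
  v ∈ W ∧ childrenIn r parent W v = ∅

/-- Vertex `v` is consistent with location `k` of configuration `j`. -/
def consistentWith (size : J → ℕ) (cfDepth : J → ℕ → ℕ) (cfWeight : J → ℕ → ℤ)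
    (depth : V → ℕ) (w : V → ℤ) (v : V) (j : J) (k : ℕ) : Prop :=
  k < size j ∧ depth v = cfDepth j k ∧ w v = cfWeight j k

/-- Feasibility of `x` for the configuration ILP over the vertex set `W`. -/
def ILPFeas (r : V) (parent : V → V) (size : J → ℕ) (ζ : ℕ)
    (cfParent : J → ℕ → ℕ) (cfDepth : J → ℕ → ℕ) (cfWeight : J → ℕ → ℤ)
    (depth : V → ℕ) (w : V → ℤ) (W : Finset V) (x : V → J → ℕ → ℕ) : Prop :=
  (∀ v ∈ W, ∀ (j : J) (k : ℕ), k < size j → k ≠ 0 →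
      (∑ s ∈ childrenIn r parent W v, x s j k) = x v j (cfParent j k)) ∧
  (∀ v, leafIn r parent W v → (∑ j : J, ∑ k ∈ Finset.range ζ, x v j k) = 1) ∧
  (∀ v ∈ W, ∀ (j : J) (k : ℕ),
      ¬ consistentWith size cfDepth cfWeight depth w v j k → x v j k = 0)

end ConfigILP

/-! Subtree `i`, realized by configuration `j i` through the location map `φ i`, contributes
the indicator of `(j i, φ i v)` at each of its vertices `v`, and `x` is the sum of these
indicators. Since `φ i` maps the subtree bijectively onto the locations of `j i` and carries
the tree's parent map to the configuration's, each indicator satisfies the flow constraint on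
its own; the leaf constraint holds because every leaf lies in exactly one subtree, and the
objective counts each subtree once, at the root. -/

theorem Set.injOn_of_existsUnique_of_lt {α : Type*} {S : Finset α} {φ : α → ℕ} {n : ℕ}
    (hlt : ∀ v ∈ S, φ v < n) (huniq : ∀ k < n, ∃! v, v ∈ S ∧ φ v = k) :
    Set.InjOn φ S :=
  fun a ha _ hb hab => (huniq _ (hlt a ha)).unique ⟨ha, rfl⟩ ⟨hb, hab.symm⟩

theorem Finset.sum_boole_eq_one_of_existsUnique {ι : Type*} [Fintype ι] {p : ι → Prop}
    [DecidablePred p] (h : ∃! i, p i) : (∑ i, if p i then 1 else 0 : ℕ) = 1 := by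
  obtain ⟨i₀, hi₀, huniq⟩ := h
  rw [Finset.sum_eq_single i₀ (fun i _ hi => if_neg (mt (huniq i) hi)) (by simp), if_pos hi₀]

section subtreeIndicator

variable {V J : Type*}

noncomputable def subtreeIndicator (j₀ : J) (S : Finset V) (φ : V → ℕ) (v : V) (j : J)
    (k : ℕ) : ℕ :=
  if j₀ = j ∧ v ∈ S ∧ φ v = k then 1 else 0

variable {j₀ : J} {S : Finset V} {φ : V → ℕ}

theorem sum_children_subtreeIndicator [Fintype V] [DecidableEq V] {r : V} {parent : V → V}
    {size : J → ℕ} {cfParent : J → ℕ → ℕ} (hφr : φ r = 0)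
    (hclosed : ∀ v ∈ S, v ≠ r → parent v ∈ S)
    (hpar : ∀ v ∈ S, v ≠ r → cfParent j₀ (φ v) = φ (parent v)) (hinj : Set.InjOn φ S)
    (hsurj : ∀ k < size j₀, ∃ v ∈ S, φ v = k) (v : V) (j : J) {k : ℕ} (hk : k < size j)
    (hk0 : k ≠ 0) :
    ∑ s ∈ childrenIn r parent Finset.univ v, subtreeIndicator j₀ S φ s j k =
      subtreeIndicator j₀ S φ v j (cfParent j k) := by
  unfold subtreeIndicator
  by_cases hj : j₀ = j
  swap
  · simp [hj]
  subst hj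
  obtain ⟨u, huS, hu⟩ := hsurj k hk
  have hur : u ≠ r := by
    rintro rfl
    exact hk0 (hu.symm.trans hφr)
  have hloc : ∀ s, (s ∈ S ∧ φ s = k) ↔ s = u := fun s =>
    ⟨fun ⟨hs, h⟩ => hinj hs huS (h.trans hu.symm), by rintro rfl; exact ⟨huS, hu⟩⟩
  have hparent_loc : ∀ s, (s ∈ S ∧ φ s = cfParent j₀ k) ↔ s = parent u := by
    rw [← hu, hpar u huS hur]
    exact fun s => ⟨fun ⟨hs, h⟩ => hinj hs (hclosed u huS hur) h,
      by rintro rfl; exact ⟨hclosed u huS hur, rfl⟩⟩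
  simp only [true_and, hloc, hparent_loc]
  rw [Finset.sum_ite_eq']
  simp [childrenIn, hur.symm, eq_comm]

theorem sum_subtreeIndicator_locations [Fintype J] {ζ : ℕ} (hlt : ∀ v ∈ S, φ v < ζ) (v : V) :
    ∑ j, ∑ k ∈ Finset.range ζ, subtreeIndicator j₀ S φ v j k = if v ∈ S then 1 else 0 := by
  by_cases hv : v ∈ S
  · simp [subtreeIndicator, hv, ite_and, hlt v hv]
  · simp [subtreeIndicator, hv]

theorem sum_subtreeIndicator_le_one [Fintype J] (v : V) (k : ℕ) :
    ∑ j, subtreeIndicator j₀ S φ v j k ≤ 1 := by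
  simp only [subtreeIndicator, ite_and, Finset.sum_ite_eq, Finset.mem_univ, if_true]
  split_ifs <;> simp

theorem subtreeIndicator_eq_zero_of_not_consistentWith {size : J → ℕ} {cfDepth : J → ℕ → ℕ}
    {cfWeight : J → ℕ → ℤ} {depth : V → ℕ} {w : V → ℤ}
    (hcons : ∀ v ∈ S, consistentWith size cfDepth cfWeight depth w v j₀ (φ v))
    {v : V} {j : J} {k : ℕ} (h : ¬ consistentWith size cfDepth cfWeight depth w v j k) :
    subtreeIndicator j₀ S φ v j k = 0 := by
  rw [subtreeIndicator, if_neg]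
  rintro ⟨rfl, hv, rfl⟩
  exact h (hcons v hv)

end subtreeIndicator

section ConfigILP

variable {V J : Type*} [Fintype V] [DecidableEq V] [Fintype J]

theorem solution_to_ilp_general
    (r : V) (parent : V → V) (w : V → ℤ) (depth : V → ℕ)
    (ζ : ℕ) (size : J → ℕ) (hζ : ∀ j, size j ≤ ζ)
    (cfParent : J → ℕ → ℕ) (cfDepth : J → ℕ → ℕ) (cfWeight : J → ℕ → ℤ)
    (m : ℕ) (S : Fin m → Finset V)
    (hclosed : ∀ i, ∀ v ∈ S i, v ≠ r → parent v ∈ S i)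
    (hleaf : ∀ v, leafIn r parent Finset.univ v → ∃! i, v ∈ S i)
    (hconfig : ∀ i, ∃ (j : J) (φ : V → ℕ),
      φ r = 0 ∧
      (∀ v ∈ S i, consistentWith size cfDepth cfWeight depth w v j (φ v)) ∧
      (∀ v ∈ S i, v ≠ r → cfParent j (φ v) = φ (parent v)) ∧
      (∀ k < size j, ∃! v, v ∈ S i ∧ φ v = k)) :
    ∃ x : V → J → ℕ → ℕ,
      ILPFeas r parent size ζ cfParent cfDepth cfWeight depth w Finset.univ x ∧
      (∑ j : J, x r j 0) ≤ m := by
  choose j φ hφr hcons hpar huniq using hconfig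
  have hlt i : ∀ v ∈ S i, φ i v < size (j i) := fun v hv => (hcons i v hv).1
  refine ⟨fun v j' k => ∑ i, subtreeIndicator (j i) (S i) (φ i) v j' k,
    ⟨?flow, ?leaf, ?consistency⟩, ?objective⟩ <;> beta_reduce
  case flow =>
    intro v _ j' k hk hk0
    rw [Finset.sum_comm]
    exact Finset.sum_congr rfl fun i _ => sum_children_subtreeIndicator (hφr i) (hclosed i)
      (hpar i) (Set.injOn_of_existsUnique_of_lt (hlt i) (huniq i))
      (fun k hk => (huniq i k hk).exists) v j' hk hk0
  case leaf =>
    intro v hv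
    simp only [Finset.sum_comm (s := Finset.range ζ) (t := (Finset.univ : Finset (Fin m)))]
    rw [Finset.sum_comm]
    simp only [sum_subtreeIndicator_locations fun v hv => (hlt _ v hv).trans_le (hζ _)]
    convert Finset.sum_boole_eq_one_of_existsUnique (hleaf v hv)
  case consistency =>
    intro v _ j' k h
    exact Finset.sum_eq_zero fun i _ => subtreeIndicator_eq_zero_of_not_consistentWith (hcons i) h
  case objective =>
    rw [Finset.sum_comm]
    calc ∑ i, ∑ j', subtreeIndicator (j i) (S i) (φ i) r j' 0 ≤ ∑ _i : Fin m, 1 :=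
          Finset.sum_le_sum fun i _ => sum_subtreeIndicator_le_one r 0
      _ = m := by simp

/-- Solution-to-ILP direction: if the tree admits a cover by `m` rooted subtrees, each
of weight at most `B`, each leaf belonging to exactly one subtree, and each subtree
realized by some configuration (via a location bijection preserving the root, the
parent relation, and consistency), then the configuration ILP has a feasible
nonnegative integer solution of objective value at most `m`. -/
theorem solution_to_ilp
    (r : V) (parent : V → V) (w : V → ℤ) (depth : V → ℕ)
    (ζ : ℕ) (size : J → ℕ) (hζ : ∀ j, size j ≤ ζ)
    (cfParent : J → ℕ → ℕ) (cfDepth : J → ℕ → ℕ) (cfWeight : J → ℕ → ℤ)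
    (B : ℤ) (m : ℕ) (S : Fin m → Finset V)
    (hroot : ∀ i, r ∈ S i)
    (hclosed : ∀ i, ∀ v ∈ S i, v ≠ r → parent v ∈ S i)
    (hweight : ∀ i, (∑ v ∈ S i, w v) ≤ B)
    (hleaf : ∀ v, leafIn r parent Finset.univ v → ∃! i, v ∈ S i)
    (hconfig : ∀ i, ∃ (j : J) (φ : V → ℕ),
      φ r = 0 ∧
      (∀ v ∈ S i, consistentWith size cfDepth cfWeight depth w v j (φ v)) ∧
      (∀ v ∈ S i, v ≠ r → cfParent j (φ v) = φ (parent v)) ∧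
      (∀ k < size j, ∃! v, v ∈ S i ∧ φ v = k)) :
    ∃ x : V → J → ℕ → ℕ,
      ILPFeas r parent size ζ cfParent cfDepth cfWeight depth w Finset.univ x ∧
      (∑ j : J, x r j 0) ≤ m :=
  solution_to_ilp_general r parent w depth ζ size hζ cfParent cfDepth cfWeight m S hclosed hleaf
    hconfig

end ConfigILP
end
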